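/- arXiv:2603.27925 — 2 statements merged into one kernel-verified Lean document; each statement's English description precedes it below -/
import Mathlib

section
/- In U⁺ one has E_{2δ} = ⟦E_{α₀}, E_{δ+α₁}⟧ = ⟦E_{δ+α₀}, E_{α₁}⟧. -/
noncomputable section
open scoped TensorProduct
namespace TwoParamQA

/-- The entries of the parameter matrix `Q`. -/
def qm (q a : ℂ) (i j : Fin 2) : ℂ :=
  if i = j then q ^ 2 else if i = 0 then a else q ^ (-4 : ℤ) * a⁻¹

/-- The bicharacter `χ` on `ℤΠ = ℤα₀ ⊕ ℤα₁` with `χ(αᵢ,αⱼ) = q_{ij}`. -/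
def chi (q a : ℂ) (l m : ℤ × ℤ) : ℂ :=
  q ^ (2 * l.1 * m.1) * a ^ (l.1 * m.2) * (q ^ (-4 : ℤ) * a⁻¹) ^ (l.2 * m.1) *
    q ^ (2 * l.2 * m.2)

/-- The `q`-Serre element `X_i³X_j − c_{ij}(3)_{q²} X_i²X_jX_i + q²c_{ij}²(3)_{q²} X_iX_jX_i²
    − q⁶c_{ij}³ X_jX_i³` (with `q_{ii} = q²`). -/
def serreElt (q : ℂ) {A : Type} [Ring A] [Algebra ℂ A] (X : Fin 2 → A)
    (c : Fin 2 → Fin 2 → ℂ) (i j : Fin 2) : A :=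
  X i ^ 3 * X j - (c i j * (1 + q ^ 2 + q ^ 4)) • (X i ^ 2 * X j * X i)
    + (q ^ 2 * c i j ^ 2 * (1 + q ^ 2 + q ^ 4)) • (X i * X j * X i ^ 2)
    - (q ^ 6 * c i j ^ 3) • (X j * X i ^ 3)

/-- Defining relations of the positive part `U⁺`: the two `q`-Serre relations. -/
inductive PRel (q a : ℂ) : FreeAlgebra ℂ (Fin 2) → FreeAlgebra ℂ (Fin 2) → Prop
  | serre (i j : Fin 2) (h : i ≠ j) :
      PRel q a (serreElt q (FreeAlgebra.ι ℂ) (qm q a) i j) 0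

/-- The positive part `U⁺` of `U_{q,Q}(\hat{sl₂})`, presented by `E₀, E₁` and the Serre
relations. -/
abbrev Up (q a : ℂ) := RingQuot (PRel q a)

/-- The generators `E₀, E₁` of `U⁺`. -/
def Ee (q a : ℂ) (i : Fin 2) : Up q a :=
  RingQuot.mkAlgHom ℂ (PRel q a) (FreeAlgebra.ι ℂ i)

variable {A : Type} [Ring A] [Algebra ℂ A]

/-- Graded bracket `⟦X,Y⟧ = XY − χ(λ,μ)YX` for `X` of degree `l` and `Y` of degree `m`. -/
def gbr (χ : ℤ × ℤ → ℤ × ℤ → ℂ) (l m : ℤ × ℤ) (X Y : A) : A :=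
  X * Y - χ l m • (Y * X)

/-- `(n)_x = 1 + x + ⋯ + x^{n-1}`. -/
def qnum (x : ℂ) (n : ℕ) : ℂ := ∑ m ∈ Finset.range n, x ^ m

/-- `[n]_q = q^{-(n-1)}(n)_{q²}`. -/
def qint (q : ℂ) (n : ℕ) : ℂ := q ^ (1 - (n : ℤ)) * qnum (q ^ 2) n

/-- `(n)_x! = (1)_x (2)_x ⋯ (n)_x`. -/
def qfact (x : ℂ) (n : ℕ) : ℂ := ∏ k ∈ Finset.range n, qnum x (k + 1)

/-- Real root vectors `E_{nδ+α₁}` (generic version, for generators `e₀, e₁` and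
bicharacter `χ`); `E_{nδ+α₁}` has degree `nδ+α₁ = (n, n+1)`. -/
def ged1 (q : ℂ) (χ : ℤ × ℤ → ℤ × ℤ → ℂ) (e0 e1 : A) : ℕ → A
  | 0 => e1
  | n + 1 => (qint q 2)⁻¹ •
      gbr χ (1, 1) ((n : ℤ), (n : ℤ) + 1) (gbr χ (1, 0) (0, 1) e0 e1)
        (ged1 q χ e0 e1 n)

/-- Imaginary root vectors `E_{nδ}` (with the convention `E_{0δ} = 1`, unused). -/
def gedl (q : ℂ) (χ : ℤ × ℤ → ℤ × ℤ → ℂ) (e0 e1 : A) : ℕ → A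
  | 0 => 1
  | n + 1 => gbr χ (1, 0) ((n : ℤ), (n : ℤ) + 1) e0 (ged1 q χ e0 e1 n)

/-- Real root vectors `E_{nδ+α₀}`, of degree `(n+1, n)`. -/
def ged0 (q : ℂ) (χ : ℤ × ℤ → ℤ × ℤ → ℂ) (e0 e1 : A) : ℕ → A
  | 0 => e0
  | n + 1 => (qint q 2)⁻¹ •
      gbr χ ((n : ℤ) + 1, (n : ℤ)) (1, 1) (ged0 q χ e0 e1 n)
        (gbr χ (1, 0) (0, 1) e0 e1)

/-- `et` is the family of modified imaginary root vectors `Ẽ_{kδ}` for the imaginary root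
vectors `edl`, i.e. it satisfies the defining recursion
`c^{−(k−1)}·k·E_{kδ} = k·Ẽ_{kδ} + (q−q⁻¹)·Σ_{r=1}^{k−1} r·c^{−(k−r−1)}·Ẽ_{rδ}E_{(k−r)δ}`
(with `c = q²a`), which is equivalent to
`1 + (q−q⁻¹)Σ_{k≥1} c^{−(k−1)}E_{kδ}z^k = exp((q−q⁻¹)Σ_{k≥1}Ẽ_{kδ}z^k)`. -/
def IsTilde (q c : ℂ) (edl et : ℕ → A) : Prop :=
  ∀ k : ℕ, c ^ (-(k : ℤ)) • (((k : ℂ) + 1) • edl (k + 1)) =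
    ((k : ℂ) + 1) • et (k + 1) +
      (q - q⁻¹) • ∑ r ∈ Finset.range k,
        (((r : ℂ) + 1) * c ^ (-((k : ℤ) - 1 - (r : ℤ)))) • (et (r + 1) * edl (k - r))

/-- `E_{nδ+α₁}` in `U⁺`. -/
def E1v (q a : ℂ) : ℕ → Up q a := ged1 q (chi q a) (Ee q a 0) (Ee q a 1)

/-- `E_{nδ}` in `U⁺`. -/
def Edlv (q a : ℂ) : ℕ → Up q a := gedl q (chi q a) (Ee q a 0) (Ee q a 1)

/-- `E_{nδ+α₀}` in `U⁺`. -/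
def E0v (q a : ℂ) : ℕ → Up q a := ged0 q (chi q a) (Ee q a 0) (Ee q a 1)

/-! The first equality is the definition of `E_{2δ}`. For the second, `⟦E₀, ⟦E_δ, E₁⟧⟧` and
`⟦⟦E₀, E_δ⟧, E₁⟧` differ by the extra terms of the `χ`-twisted Jacobi identity. Since
`⟦E₀, E₁⟧ = E_δ`, these are `(χ(α₀, δ) − χ(δ, α₁)) E_δ²`, and both coefficients equal `q²a`;
no Serre relation is needed. -/

theorem gbr_smul_left (χ : ℤ × ℤ → ℤ × ℤ → ℂ) (l m : ℤ × ℤ) (c : ℂ) (X Y : A) :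
    gbr χ l m (c • X) Y = c • gbr χ l m X Y := by
  simp only [gbr, smul_mul_assoc, mul_smul_comm, smul_sub, smul_comm c (χ l m)]

theorem gbr_smul_right (χ : ℤ × ℤ → ℤ × ℤ → ℂ) (l m : ℤ × ℤ) (c : ℂ) (X Y : A) :
    gbr χ l m X (c • Y) = c • gbr χ l m X Y := by
  simp only [gbr, smul_mul_assoc, mul_smul_comm, smul_sub, smul_comm c (χ l m)]

/-- The degree labels `w` and `v` stand for `y + z` and `x + y`. -/
theorem gbr_gbr_right (χ : ℤ × ℤ → ℤ × ℤ → ℂ) {x y z w v : ℤ × ℤ}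
    (hw : χ x w = χ x y * χ x z) (hv : χ v z = χ x z * χ y z) (X Y Z : A) :
    gbr χ x w X (gbr χ y z Y Z) =
      gbr χ v z (gbr χ x y X Y) Z + χ x y • (Y * gbr χ x z X Z)
        - χ y z • (gbr χ x z X Z * Y) := by
  simp only [gbr, hw, hv, mul_sub, sub_mul, smul_sub, mul_smul_comm, smul_mul_assoc, smul_smul,
    mul_assoc]
  module

theorem stmt_1_general (q a : ℂ) :
    Edlv q a 2 = gbr (chi q a) (1, 0) (1, 2) (Ee q a 0) (E1v q a 1) ∧
    Edlv q a 2 = gbr (chi q a) (2, 1) (0, 1) (E0v q a 1) (Ee q a 1) := by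
  refine ⟨rfl, ?_⟩
  set Eδ := gbr (chi q a) (1, 0) (0, 1) (Ee q a 0) (Ee q a 1)
  have jacobi := gbr_gbr_right (chi q a) (x := (1, 0)) (y := (1, 1)) (z := (0, 1))
    (w := (1, 2)) (v := (2, 1)) (by norm_num [chi]; ring) (by norm_num [chi]; ring)
    (Ee q a 0) Eδ (Ee q a 1)
  have hδ : chi q a (1, 0) (1, 1) = chi q a (1, 1) (0, 1) := by norm_num [chi]; ring
  calc Edlv q a 2
      = (qint q 2)⁻¹ • gbr (chi q a) (1, 0) (1, 2) (Ee q a 0)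
          (gbr (chi q a) (1, 1) (0, 1) Eδ (Ee q a 1)) := gbr_smul_right ..
    _ = (qint q 2)⁻¹ • gbr (chi q a) (2, 1) (0, 1)
          (gbr (chi q a) (1, 0) (1, 1) (Ee q a 0) Eδ) (Ee q a 1) := by
      rw [jacobi, hδ, add_sub_cancel_right]
    _ = gbr (chi q a) (2, 1) (0, 1) (E0v q a 1) (Ee q a 1) := (gbr_smul_left ..).symm

/-- Lemma 3.3: `E_{2δ} = ⟦E_{α₀}, E_{δ+α₁}⟧ = ⟦E_{δ+α₀}, E_{α₁}⟧` in `U⁺`. -/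
theorem stmt_1 (q a : ℂ) (hq : q ≠ 0) (hqn : ∀ n : ℕ, 1 ≤ n → q ^ n ≠ 1) (ha : a ≠ 0) :
    Edlv q a 2 = gbr (chi q a) (1, 0) (1, 2) (Ee q a 0) (E1v q a 1) ∧
    Edlv q a 2 = gbr (chi q a) (2, 1) (0, 1) (E0v q a 1) (Ee q a 1) :=
  stmt_1_general q a

end TwoParamQA
end
end

section
/- For every integer n ≥ 1, the root vectors E_{nδ}, E_{nδ+α₀} and E_{nδ+α₁} are nonzero elements of U⁺. -/
/-!
`U⁺` acts on `ℤ →₀ ℂ` through the quantum torus `yx = t xy` with `t = q₁₀ = q⁻⁴a⁻¹`: `E₀` acts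
as the shift `x` and `E₁` as the diagonal operator `y`. Since `E₁E₀ = t E₀E₁` (resp.
`E₀E₁ = t⁻¹ E₁E₀`), the Serre element for `(i, j)` is `(1 - c)(1 - q²c)(1 - q⁴c) E_i³E_j` with
`c = q_{ij} t^{±1}`, which is `q⁻⁴` resp. `1`; so the Serre relations hold.

The bracket of the monomials `x^l` and `x^m` is `t^{l₂m₁}(1 - q^{2l₁m₁ + 2l₂m₂ - 4l₁m₂}) x^{l+m}`.
Along the recursions defining the root vectors the exponent is `-4`, `-2` or `-2n-4`, never `0`,
so, `q` not being a root of unity, every root vector acts as a nonzero multiple of a monomial.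
-/

noncomputable section
open scoped TensorProduct
namespace TwoParamQA

variable {A : Type} [Ring A] [Algebra ℂ A]

lemma zpow_ne_one_of_pow_ne_one {q : ℂ} (hqn : ∀ n : ℕ, 1 ≤ n → q ^ n ≠ 1) {k : ℤ}
    (hk : k ≠ 0) : q ^ k ≠ 1 := by
  rcases Int.natAbs_eq k with h | h <;> rw [h]
  · rw [zpow_natCast]
    exact hqn _ (Int.natAbs_pos.mpr hk)
  · rw [zpow_neg, zpow_natCast, inv_ne_one]
    exact hqn _ (Int.natAbs_pos.mpr hk)

section QuantumTorus

variable {K : Type*} [Field K]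

def qtorus (t : K) (l : ℤ × ℤ) : Module.End K (ℤ →₀ K) :=
  Finsupp.lsum K fun k => t ^ (l.2 * k) • Finsupp.lsingle (k + l.1)

lemma qtorus_single (t : K) (l : ℤ × ℤ) (k : ℤ) (c : K) :
    qtorus t l (Finsupp.single k c) = t ^ (l.2 * k) • Finsupp.single (k + l.1) c := by
  simp [qtorus]

lemma qtorus_mul {t : K} (ht : t ≠ 0) (l m : ℤ × ℤ) :
    qtorus t l * qtorus t m = t ^ (l.2 * m.1) • qtorus t (l + m) := by
  refine Finsupp.lhom_ext fun k c => ?_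
  simp only [Module.End.mul_apply, qtorus_single, map_smul, LinearMap.smul_apply, smul_smul,
    ← zpow_add₀ ht, Prod.fst_add, Prod.snd_add]
  congr 2 <;> ring

lemma qtorus_ne_zero (t : K) (l : ℤ × ℤ) : qtorus t l ≠ 0 := fun h => by
  simpa [qtorus_single] using DFunLike.congr_fun h (Finsupp.single 0 1)

def IsTorusMonomial (t : K) (l : ℤ × ℤ) (X : Module.End K (ℤ →₀ K)) : Prop :=
  ∃ c : K, c ≠ 0 ∧ X = c • qtorus t l

lemma isTorusMonomial_qtorus (t : K) (l : ℤ × ℤ) : IsTorusMonomial t l (qtorus t l) :=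
  ⟨1, one_ne_zero, (one_smul _ _).symm⟩

lemma IsTorusMonomial.smul {t : K} {l : ℤ × ℤ} {X : Module.End K (ℤ →₀ K)}
    (hX : IsTorusMonomial t l X) {c : K} (hc : c ≠ 0) : IsTorusMonomial t l (c • X) := by
  obtain ⟨d, hd, rfl⟩ := hX
  exact ⟨c * d, mul_ne_zero hc hd, smul_smul c d _⟩

lemma IsTorusMonomial.ne_zero {t : K} {l : ℤ × ℤ} {X : Module.End K (ℤ →₀ K)}
    (hX : IsTorusMonomial t l X) : X ≠ 0 := by
  obtain ⟨c, hc, rfl⟩ := hX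
  exact smul_ne_zero hc (qtorus_ne_zero t l)

end QuantumTorus

lemma gbr_smul_smul (χ : ℤ × ℤ → ℤ × ℤ → ℂ) (l m : ℤ × ℤ) (c d : ℂ) (X Y : A) :
    gbr χ l m (c • X) (d • Y) = (c * d) • gbr χ l m X Y := by
  simp only [gbr, smul_sub, smul_mul_smul_comm, smul_comm (χ l m)]
  rw [mul_comm d c]

lemma gbr_qtorus {t : ℂ} (ht : t ≠ 0) (χ : ℤ × ℤ → ℤ × ℤ → ℂ) (l m : ℤ × ℤ) :
    gbr χ l m (qtorus t l) (qtorus t m) =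
      (t ^ (l.2 * m.1) - χ l m * t ^ (m.2 * l.1)) • qtorus t (l + m) := by
  rw [gbr, qtorus_mul ht, qtorus_mul ht, add_comm m, smul_smul]
  exact (sub_smul _ _ _).symm

lemma serreElt_eq_smul_of_mul_eq_smul_mul (q : ℂ) (X : Fin 2 → A) (c : Fin 2 → Fin 2 → ℂ)
    (i j : Fin 2) {s : ℂ} (h : X j * X i = s • (X i * X j)) :
    serreElt q X c i j =
      ((1 - c i j * s) * (1 - q ^ 2 * c i j * s) * (1 - q ^ 4 * c i j * s)) •
        (X i ^ 3 * X j) := by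
  have hpow : ∀ k : ℕ, X j * X i ^ k = s ^ k • (X i ^ k * X j) := by
    intro k
    induction k with
    | zero => simp
    | succ k ih =>
      rw [pow_succ, ← mul_assoc, ih, smul_mul_assoc, mul_assoc, h, mul_smul_comm, smul_smul,
        ← mul_assoc, ← pow_succ, pow_succ']
  have h2 : X i ^ 2 * X j * X i = s • (X i ^ 3 * X j) := by
    rw [mul_assoc, h, mul_smul_comm, ← mul_assoc, ← pow_succ]
  have h1 : X i * X j * X i ^ 2 = s ^ 2 • (X i ^ 3 * X j) := by
    rw [mul_assoc, hpow, mul_smul_comm, ← mul_assoc, ← pow_succ']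
  rw [serreElt, h2, h1, hpow]
  match_scalars
  ring

section Maps

variable {B F : Type} [Ring B] [Algebra ℂ B] [FunLike F A B] [AlgHomClass F ℂ A B]

lemma map_serreElt (f : F) (q : ℂ) (X : Fin 2 → A) (c : Fin 2 → Fin 2 → ℂ) (i j : Fin 2) :
    f (serreElt q X c i j) = serreElt q (fun k => f (X k)) c i j := by
  simp [serreElt]

lemma map_gbr (f : F) (χ : ℤ × ℤ → ℤ × ℤ → ℂ) (l m : ℤ × ℤ) (X Y : A) :
    f (gbr χ l m X Y) = gbr χ l m (f X) (f Y) := by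
  simp [gbr]

lemma map_ged1 (f : F) (q : ℂ) (χ : ℤ × ℤ → ℤ × ℤ → ℂ) (e0 e1 : A) (n : ℕ) :
    f (ged1 q χ e0 e1 n) = ged1 q χ (f e0) (f e1) n := by
  induction n with
  | zero => rfl
  | succ n ih => rw [ged1, ged1, map_smul, map_gbr, map_gbr, ih]

lemma map_gedl (f : F) (q : ℂ) (χ : ℤ × ℤ → ℤ × ℤ → ℂ) (e0 e1 : A) (n : ℕ) :
    f (gedl q χ e0 e1 n) = gedl q χ (f e0) (f e1) n := by
  cases n with
  | zero => exact map_one f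
  | succ n => rw [gedl, gedl, map_gbr, map_ged1]

lemma map_ged0 (f : F) (q : ℂ) (χ : ℤ × ℤ → ℤ × ℤ → ℂ) (e0 e1 : A) (n : ℕ) :
    f (ged0 q χ e0 e1 n) = ged0 q χ (f e0) (f e1) n := by
  induction n with
  | zero => rfl
  | succ n ih => rw [ged0, ged0, map_smul, map_gbr, map_gbr, ih]

end Maps

lemma qint_two_ne_zero {q : ℂ} (hq : q ≠ 0) (hqn : ∀ n : ℕ, 1 ≤ n → q ^ n ≠ 1) :
    qint q 2 ≠ 0 := by
  have hq2 : 1 + q ^ 2 ≠ 0 := fun h =>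
    hqn 4 (by norm_num) (by linear_combination (q ^ 2 - 1) * h)
  simpa [qint, qnum, Finset.sum_range_succ, hq] using hq2

section Parameters

variable {q a : ℂ}

lemma qm_one_zero : qm q a 1 0 = q ^ (-4 : ℤ) * a⁻¹ := by
  simp [qm]

lemma mul_qm_one_zero (ha : a ≠ 0) : a * qm q a 1 0 = q ^ (-4 : ℤ) := by
  rw [qm_one_zero, mul_left_comm, mul_inv_cancel₀ ha, mul_one]

lemma qm_one_zero_ne_zero (hq : q ≠ 0) (ha : a ≠ 0) : qm q a 1 0 ≠ 0 := by
  rw [qm_one_zero]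
  exact mul_ne_zero (zpow_ne_zero _ hq) (inv_ne_zero ha)

lemma chi_mul_zpow_qm (hq : q ≠ 0) (ha : a ≠ 0) (l m : ℤ × ℤ) :
    chi q a l m * qm q a 1 0 ^ (l.1 * m.2 - l.2 * m.1) =
      q ^ (2 * l.1 * m.1 + 2 * l.2 * m.2 - 4 * l.1 * m.2) := by
  have ht := qm_one_zero_ne_zero hq ha
  have hat : a ^ (l.1 * m.2) * qm q a 1 0 ^ (l.1 * m.2) = q ^ (-4 * (l.1 * m.2)) := by
    rw [← mul_zpow, mul_qm_one_zero ha, ← zpow_mul]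
  calc chi q a l m * qm q a 1 0 ^ (l.1 * m.2 - l.2 * m.1)
      = q ^ (2 * l.1 * m.1) * q ^ (2 * l.2 * m.2) *
          (a ^ (l.1 * m.2) * qm q a 1 0 ^ (l.1 * m.2)) := by
        rw [chi, ← qm_one_zero, zpow_sub₀ ht]
        field_simp
    _ = _ := by
        rw [hat, ← zpow_add₀ hq, ← zpow_add₀ hq]
        ring_nf

lemma gbr_chi_qtorus (hq : q ≠ 0) (ha : a ≠ 0) (l m : ℤ × ℤ) :
    gbr (chi q a) l m (qtorus (qm q a 1 0) l) (qtorus (qm q a 1 0) m) =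
      (qm q a 1 0 ^ (l.2 * m.1) *
        (1 - q ^ (2 * l.1 * m.1 + 2 * l.2 * m.2 - 4 * l.1 * m.2))) •
        qtorus (qm q a 1 0) (l + m) := by
  have ht := qm_one_zero_ne_zero hq ha
  rw [gbr_qtorus ht, ← chi_mul_zpow_qm hq ha, zpow_sub₀ ht, mul_comm m.2]
  congr 1
  field_simp

lemma IsTorusMonomial.gbr_chi (hq : q ≠ 0) (ha : a ≠ 0) (hqn : ∀ n : ℕ, 1 ≤ n → q ^ n ≠ 1)
    {l m k : ℤ × ℤ} (hk : l + m = k) (hexp : 2 * l.1 * m.1 + 2 * l.2 * m.2 - 4 * l.1 * m.2 ≠ 0)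
    {X Y : Module.End ℂ (ℤ →₀ ℂ)} (hX : IsTorusMonomial (qm q a 1 0) l X)
    (hY : IsTorusMonomial (qm q a 1 0) m Y) :
    IsTorusMonomial (qm q a 1 0) k (gbr (chi q a) l m X Y) := by
  obtain ⟨c, hc, rfl⟩ := hX
  obtain ⟨d, hd, rfl⟩ := hY
  have hcoeff : 1 - q ^ (2 * l.1 * m.1 + 2 * l.2 * m.2 - 4 * l.1 * m.2) ≠ 0 :=
    sub_ne_zero.2 (zpow_ne_one_of_pow_ne_one hqn hexp).symm
  rw [gbr_smul_smul, gbr_chi_qtorus hq ha, hk]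
  exact ((isTorusMonomial_qtorus _ k).smul
    (mul_ne_zero (zpow_ne_zero _ (qm_one_zero_ne_zero hq ha)) hcoeff)).smul (mul_ne_zero hc hd)

lemma isTorusMonomial_gbr_generators (hq : q ≠ 0) (ha : a ≠ 0)
    (hqn : ∀ n : ℕ, 1 ≤ n → q ^ n ≠ 1) :
    IsTorusMonomial (qm q a 1 0) (1, 1)
      (gbr (chi q a) (1, 0) (0, 1) (qtorus (qm q a 1 0) (1, 0)) (qtorus (qm q a 1 0) (0, 1))) :=
  (isTorusMonomial_qtorus _ _).gbr_chi hq ha hqn rfl (by norm_num) (isTorusMonomial_qtorus _ _)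

lemma isTorusMonomial_ged1 (hq : q ≠ 0) (ha : a ≠ 0) (hqn : ∀ n : ℕ, 1 ≤ n → q ^ n ≠ 1)
    (n : ℕ) :
    IsTorusMonomial (qm q a 1 0) (n, n + 1)
      (ged1 q (chi q a) (qtorus (qm q a 1 0) (1, 0)) (qtorus (qm q a 1 0) (0, 1)) n) := by
  induction n with
  | zero => exact isTorusMonomial_qtorus _ _
  | succ n ih =>
    exact ((isTorusMonomial_gbr_generators hq ha hqn).gbr_chi hq ha hqn
      (by ext <;> simp <;> ring) (by ring_nf; norm_num) ih).smul
      (inv_ne_zero (qint_two_ne_zero hq hqn))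

lemma isTorusMonomial_ged0 (hq : q ≠ 0) (ha : a ≠ 0) (hqn : ∀ n : ℕ, 1 ≤ n → q ^ n ≠ 1)
    (n : ℕ) :
    IsTorusMonomial (qm q a 1 0) (n + 1, n)
      (ged0 q (chi q a) (qtorus (qm q a 1 0) (1, 0)) (qtorus (qm q a 1 0) (0, 1)) n) := by
  induction n with
  | zero => exact isTorusMonomial_qtorus _ _
  | succ n ih =>
    exact (ih.gbr_chi hq ha hqn (by ext <;> simp) (by ring_nf; norm_num)
      (isTorusMonomial_gbr_generators hq ha hqn)).smul (inv_ne_zero (qint_two_ne_zero hq hqn))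

lemma isTorusMonomial_gedl_succ (hq : q ≠ 0) (ha : a ≠ 0) (hqn : ∀ n : ℕ, 1 ≤ n → q ^ n ≠ 1)
    (n : ℕ) :
    IsTorusMonomial (qm q a 1 0) (n + 1, n + 1)
      (gedl q (chi q a) (qtorus (qm q a 1 0) (1, 0)) (qtorus (qm q a 1 0) (0, 1)) (n + 1)) :=
  (isTorusMonomial_qtorus _ _).gbr_chi hq ha hqn (by ext <;> simp; ring) (by omega)
    (isTorusMonomial_ged1 hq ha hqn n)

end Parameters

def torusRep (q a : ℂ) : FreeAlgebra ℂ (Fin 2) →ₐ[ℂ] Module.End ℂ (ℤ →₀ ℂ) :=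
  FreeAlgebra.lift ℂ fun i => qtorus (qm q a 1 0) (if i = 0 then (1, 0) else (0, 1))

lemma torusRep_serreElt {q a : ℂ} (hq : q ≠ 0) (ha : a ≠ 0) (i j : Fin 2) (hij : i ≠ j) :
    torusRep q a (serreElt q (FreeAlgebra.ι ℂ) (qm q a) i j) = 0 := by
  have ht := qm_one_zero_ne_zero hq ha
  have hcomm : qtorus (qm q a 1 0) (0, 1) * qtorus (qm q a 1 0) (1, 0) =
      qm q a 1 0 • (qtorus (qm q a 1 0) (1, 0) * qtorus (qm q a 1 0) (0, 1)) := by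
    simp [qtorus_mul ht]
  simp only [torusRep, map_serreElt, FreeAlgebra.lift_ι_apply]
  obtain ⟨rfl, rfl⟩ | ⟨rfl, rfl⟩ : i = 0 ∧ j = 1 ∨ i = 1 ∧ j = 0 := by omega
  · rw [serreElt_eq_smul_of_mul_eq_smul_mul q _ _ 0 1 (s := qm q a 1 0) (by simpa using hcomm)]
    refine smul_eq_zero_of_left (mul_eq_zero_of_right _ (sub_eq_zero.2 ?_)) _
    rw [mul_assoc, show qm q a 0 1 = a from rfl, mul_qm_one_zero ha, ← zpow_natCast,
      ← zpow_add₀ hq]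
    norm_num
  · rw [serreElt_eq_smul_of_mul_eq_smul_mul q _ _ 1 0 (s := (qm q a 1 0)⁻¹)
      (by simp [hcomm, smul_smul, ht])]
    exact smul_eq_zero_of_left (by simp [ht]) _

def upRep {q a : ℂ} (hq : q ≠ 0) (ha : a ≠ 0) : Up q a →ₐ[ℂ] Module.End ℂ (ℤ →₀ ℂ) :=
  RingQuot.liftAlgHom ℂ ⟨torusRep q a, fun _ _ ⟨i, j, hij⟩ => by
    rw [torusRep_serreElt hq ha i j hij, map_zero]⟩

lemma upRep_Ee {q a : ℂ} (hq : q ≠ 0) (ha : a ≠ 0) (i : Fin 2) :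
    upRep hq ha (Ee q a i) = qtorus (qm q a 1 0) (if i = 0 then (1, 0) else (0, 1)) := by
  rw [upRep, Ee, RingQuot.liftAlgHom_mkAlgHom_apply, torusRep, FreeAlgebra.lift_ι_apply]

/-- Lemma 3.6(4): for every `n ≥ 1`, the root vectors `E_{nδ}`, `E_{nδ+α₀}` and
`E_{nδ+α₁}` are nonzero elements of `U⁺`. -/
theorem stmt_8 (q a : ℂ) (hq : q ≠ 0) (hqn : ∀ n : ℕ, 1 ≤ n → q ^ n ≠ 1) (ha : a ≠ 0) :
    ∀ n : ℕ, 1 ≤ n →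
      Edlv q a n ≠ 0 ∧ E0v q a n ≠ 0 ∧ E1v q a n ≠ 0 := by
  intro n hn
  obtain ⟨m, rfl⟩ := Nat.exists_eq_add_of_le' hn
  have hE0 : upRep hq ha (Ee q a 0) = qtorus (qm q a 1 0) (1, 0) := upRep_Ee hq ha 0
  have hE1 : upRep hq ha (Ee q a 1) = qtorus (qm q a 1 0) (0, 1) := upRep_Ee hq ha 1
  refine ⟨ne_zero_of_map (f := upRep hq ha) ?_, ne_zero_of_map (f := upRep hq ha) ?_,
    ne_zero_of_map (f := upRep hq ha) ?_⟩
  · rw [Edlv, map_gedl, hE0, hE1]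
    exact (isTorusMonomial_gedl_succ hq ha hqn m).ne_zero
  · rw [E0v, map_ged0, hE0, hE1]
    exact (isTorusMonomial_ged0 hq ha hqn (m + 1)).ne_zero
  · rw [E1v, map_ged1, hE0, hE1]
    exact (isTorusMonomial_ged1 hq ha hqn (m + 1)).ne_zero

end TwoParamQA
end
end
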